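/- arXiv:2505.20005 — 6 statements merged into one kernel-verified Lean document; each statement's English description precedes it below -/
import Mathlib

section
/- If S is a real p×p positive semidefinite matrix that is not positive definite (i.e., has a zero eigenvalue), then the Gaussian log-likelihood l(Θ) = log det Θ − tr(SΘ) is unbounded above over positive definite matrices Θ. -/
/-!
Since `S x = 0`, the rank-one perturbations `Θ_t = 1 + t • x xᵀ` (`t ≥ 0`) are positive definite
with `tr (S Θ_t) = tr S` constant, while `det Θ_t = 1 + t ‖x‖²` grows without bound.
-/

open Matrix

namespace Matrix

variable {n : Type*} [Fintype n] [DecidableEq n]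

theorem det_one_add_vecMulVec {α : Type*} [CommRing α] (u v : n → α) :
    (1 + vecMulVec u v).det = 1 + v ⬝ᵥ u := by
  rw [vecMulVec_eq Unit, det_one_add_replicateCol_mul_replicateRow]

theorem posDef_one_add_smul_vecMulVec_self (x : n → ℝ) {t : ℝ} (ht : 0 ≤ t) :
    (1 + t • vecMulVec x x).PosDef := by
  refine PosDef.one.add_posSemidef (PosSemidef.smul ?_ ht)
  simpa using posSemidef_vecMulVec_self_star x

theorem trace_mul_one_add_smul_vecMulVec_of_mulVec_eq_zero {α : Type*} [CommRing α]
    {S : Matrix n n α} {x : n → α} (hx : S *ᵥ x = 0) (t : α) (y : n → α) :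
    (S * (1 + t • vecMulVec x y)).trace = S.trace := by
  rw [mul_add, mul_one, Matrix.mul_smul, mul_vecMulVec, hx, zero_vecMulVec, smul_zero, add_zero]

theorem log_det_sub_trace_one_add_smul_vecMulVec_of_mulVec_eq_zero
    {S : Matrix n n ℝ} {x : n → ℝ} (hx : S *ᵥ x = 0) (t : ℝ) :
    Real.log (1 + t • vecMulVec x x).det - (S * (1 + t • vecMulVec x x)).trace =
      Real.log (1 + t * (x ⬝ᵥ x)) - S.trace := by
  rw [trace_mul_one_add_smul_vecMulVec_of_mulVec_eq_zero hx, ← smul_vecMulVec,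
    det_one_add_vecMulVec, dotProduct_smul, smul_eq_mul]

end Matrix

theorem loglik_unbounded_of_singular_general (p : ℕ) (S : Matrix (Fin p) (Fin p) ℝ)
    (x : Fin p → ℝ) (hx : x ≠ 0) (hker : S *ᵥ x = 0) :
    ∀ M : ℝ, ∃ Θ : Matrix (Fin p) (Fin p) ℝ, Θ.PosDef ∧
      M < Real.log Θ.det - (S * Θ).trace := by
  intro M
  have hxx : 0 < x ⬝ᵥ x := by simpa using dotProduct_star_self_pos_iff.mpr hx
  set a := M + S.trace
  refine ⟨1 + (Real.exp a / (x ⬝ᵥ x)) • vecMulVec x x,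
    posDef_one_add_smul_vecMulVec_self x (by positivity), ?_⟩
  rw [log_det_sub_trace_one_add_smul_vecMulVec_of_mulVec_eq_zero hker, div_mul_cancel₀ _ hxx.ne']
  have : a < Real.log (1 + Real.exp a) := by
    simpa using Real.log_lt_log (Real.exp_pos a) (lt_one_add (Real.exp a))
  linarith

theorem loglik_unbounded_of_singular (p : ℕ) (S : Matrix (Fin p) (Fin p) ℝ)
    (hS : S.PosSemidef) (x : Fin p → ℝ) (hx : x ≠ 0) (hker : S *ᵥ x = 0) :
    ∀ M : ℝ, ∃ Θ : Matrix (Fin p) (Fin p) ℝ, Θ.PosDef ∧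
      M < Real.log Θ.det - (S * Θ).trace :=
  loglik_unbounded_of_singular_general p S x hx hker
end

section
/- For any real positive semidefinite p×p matrix S and any ρ > 0, the graphical lasso objective G(Θ) = log det Θ − tr(SΘ) − ρ Σ_{i,j} |Θ_{ij}| is bounded above on the set of positive definite matrices Θ. -/
/-!
Diagonalising `Θ`, the bound `log λ ≤ ρ λ - log ρ - 1` on each eigenvalue gives
`log det Θ ≤ ρ tr Θ - p (log ρ + 1)`. The trace term `tr (S Θ)` is nonnegative since both
factors are positive semidefinite, and `tr Θ ≤ ∑ |Θ i j|`, so the penalty absorbs `ρ tr Θ`.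
-/

open Matrix

open scoped ComplexOrder MatrixOrder in
theorem Matrix.PosSemidef.trace_mul_nonneg {n 𝕜 : Type*} [Fintype n] [RCLike 𝕜]
    {A B : Matrix n n 𝕜} (hA : A.PosSemidef) (hB : B.PosSemidef) : 0 ≤ (A * B).trace := by
  classical
  obtain ⟨X, rfl⟩ := CStarAlgebra.nonneg_iff_eq_star_mul_self.mp hB.nonneg
  rw [star_eq_conjTranspose, ← mul_assoc, trace_mul_cycle]
  exact (hA.mul_mul_conjTranspose_same X).trace_nonneg

theorem Real.log_le_mul_sub_log_sub_one {c x : ℝ} (hc : 0 < c) (hx : 0 < x) :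
    Real.log x ≤ c * x - Real.log c - 1 := by
  have := Real.log_le_sub_one_of_pos (mul_pos hc hx)
  rw [Real.log_mul hc.ne' hx.ne'] at this
  linarith

theorem Matrix.PosDef.log_det_le {n : Type*} [Fintype n] [DecidableEq n] {A : Matrix n n ℝ}
    (hA : A.PosDef) {c : ℝ} (hc : 0 < c) :
    Real.log A.det ≤ c * A.trace - Fintype.card n * (Real.log c + 1) := by
  have hH := hA.isHermitian
  have hdet : A.det = ∏ i, hH.eigenvalues i := by simpa using hH.det_eq_prod_eigenvalues
  have htrace : A.trace = ∑ i, hH.eigenvalues i := by simpa using hH.trace_eq_sum_eigenvalues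
  rw [hdet, htrace, Real.log_prod fun i _ => (hA.eigenvalues_pos i).ne']
  calc ∑ i, Real.log (hH.eigenvalues i)
      ≤ ∑ i, (c * hH.eigenvalues i - (Real.log c + 1)) := Finset.sum_le_sum fun i _ => by
        linarith [Real.log_le_mul_sub_log_sub_one hc (hA.eigenvalues_pos i)]
    _ = c * ∑ i, hH.eigenvalues i - Fintype.card n * (Real.log c + 1) := by
        simp only [Finset.sum_sub_distrib, Finset.mul_sum, Finset.sum_const, Finset.card_univ,
          nsmul_eq_mul]

theorem Matrix.trace_le_sum_sum_abs {n α : Type*} [Fintype n] [AddCommGroup α] [LinearOrder α]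
    [IsOrderedAddMonoid α] (A : Matrix n n α) : A.trace ≤ ∑ i, ∑ j, |A i j| :=
  Finset.sum_le_sum fun i _ => (le_abs_self (A i i)).trans <|
    Finset.single_le_sum (f := fun j => |A i j|) (fun _ _ => abs_nonneg _) (Finset.mem_univ i)

theorem glasso_bdd_above (p : ℕ) (S : Matrix (Fin p) (Fin p) ℝ)
    (hS : S.PosSemidef) (ρ : ℝ) (hρ : 0 < ρ) :
    ∃ M : ℝ, ∀ Θ : Matrix (Fin p) (Fin p) ℝ, Θ.PosDef →
      Real.log Θ.det - (S * Θ).trace - ρ * ∑ i, ∑ j, |Θ i j| ≤ M := by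
  refine ⟨-(p * (Real.log ρ + 1)), fun Θ hΘ => ?_⟩
  have hlogdet := hΘ.log_det_le hρ
  rw [Fintype.card_fin] at hlogdet
  have htrace_le := mul_le_mul_of_nonneg_left Θ.trace_le_sum_sum_abs hρ.le
  linarith [hS.trace_mul_nonneg hΘ.posSemidef]
end

section
/- For any real positive semidefinite p×p matrix S and ρ > 0, the graphical lasso objective G(Θ) = log det Θ − tr(SΘ) − ρ Σ_{i,j} |Θ_{ij}| attains its maximum over positive definite matrices Θ. -/
/-!
Write `‖Θ‖₁ = ∑ i j, |Θ i j|` and `G` for the objective. For `Θ ≻ 0` we have `tr (S Θ) ≥ 0`, and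
every entry of `Θ` is at most `‖Θ‖₁`, so `det Θ ≤ p! ‖Θ‖₁ ^ p`. Hence
`G Θ ≤ log p! + p log ‖Θ‖₁ - ρ ‖Θ‖₁`, which tends to `-∞`, and `G Θ ≤ log det Θ`. So the superlevel
set `{G ≥ G 1}` lies in the compact set of positive semidefinite `Θ` with `‖Θ‖₁ ≤ T` and
`det Θ ≥ exp (G 1) > 0`. These matrices are positive definite and `G` is continuous on them, so its
maximum there is the maximum over all positive definite matrices.
-/

open Matrix Filter

theorem IsCompact.exists_forall_le_of_superlevel_subset {α : Type*} [TopologicalSpace α]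
    {f : α → ℝ} {s K : Set α} (hK : IsCompact K) (hKs : K ⊆ s) (hf : ContinuousOn f K)
    {x₀ : α} (hx₀ : x₀ ∈ s) (hsuper : ∀ x ∈ s, f x₀ ≤ f x → x ∈ K) :
    ∃ y ∈ s, ∀ x ∈ s, f x ≤ f y := by
  obtain ⟨y, hyK, hmax⟩ := hK.exists_isMaxOn ⟨x₀, hsuper x₀ hx₀ le_rfl⟩ hf
  refine ⟨y, hKs hyK, fun x hx => ?_⟩
  rcases le_or_gt (f x₀) (f x) with hle | hlt
  · exact hmax (hsuper x hx hle)
  · exact hlt.le.trans (hmax (hsuper x₀ hx₀ le_rfl))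

theorem tendsto_add_mul_log_sub_mul_atBot (a b : ℝ) {ρ : ℝ} (hρ : 0 < ρ) :
    Tendsto (fun t => a + b * Real.log t - ρ * t) atTop atBot := by
  have hlo : (fun t => a + b * Real.log t) =o[atTop] id :=
    (Asymptotics.isLittleO_const_id_atTop a).add (Real.isLittleO_log_id_atTop.const_mul_left b)
  have h := tendsto_id.atTop_mul_neg (by linarith : 0 - ρ < 0)
    (hlo.tendsto_div_nhds_zero.sub_const ρ)
  refine h.congr' ?_
  filter_upwards [eventually_gt_atTop 0] with t ht
  simp only [id]
  field_simp

namespace Matrix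

section RCLike

open scoped ComplexOrder

variable {n 𝕜 : Type*} [Fintype n] [RCLike 𝕜]

theorem PosSemidef.trace_mul_nonneg_s7 {A B : Matrix n n 𝕜} (hA : A.PosSemidef)
    (hB : B.PosSemidef) : 0 ≤ (A * B).trace := by
  classical
  open scoped MatrixOrder in
  obtain ⟨C, rfl⟩ := CStarAlgebra.nonneg_iff_eq_star_mul_self.mp hA.nonneg
  rw [star_eq_conjTranspose, Matrix.mul_assoc, trace_mul_comm]
  exact (hB.mul_mul_conjTranspose_same C).trace_nonneg

theorem isClosed_setOf_posSemidef : IsClosed {A : Matrix n n 𝕜 | A.PosSemidef} := by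
  simp only [posSemidef_iff_dotProduct_mulVec, IsHermitian, Set.ofPred_and, Set.ofPred_forall]
  exact (isClosed_eq (by fun_prop) (by fun_prop)).inter
    (isClosed_iInter fun x => isClosed_le continuous_const (by fun_prop))

end RCLike

section EntrywiseL1

variable {m n : Type*} [Fintype m] [Fintype n]

theorem abs_le_sum_sum_abs (A : Matrix m n ℝ) (i : m) (j : n) :
    |A i j| ≤ ∑ i, ∑ j, |A i j| :=
  (Finset.single_le_sum (f := fun j => |A i j|) (fun _ _ => abs_nonneg _) (Finset.mem_univ j)).trans
    (Finset.single_le_sum (f := fun i => ∑ j, |A i j|)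
      (fun _ _ => Finset.sum_nonneg fun _ _ => abs_nonneg _) (Finset.mem_univ i))

theorem isCompact_setOf_sum_sum_abs_le (T : ℝ) :
    IsCompact {A : Matrix m n ℝ | ∑ i, ∑ j, |A i j| ≤ T} := by
  refine (isCompact_univ_pi fun _ => isCompact_univ_pi fun _ => isCompact_Icc (a := -T) (b := T))
    |>.of_isClosed_subset (isClosed_le (by fun_prop) continuous_const) fun A hA => ?_
  simp only [Set.mem_univ_pi]
  exact fun i j => abs_le.mp ((abs_le_sum_sum_abs A i j).trans hA)

theorem log_det_le_log_factorial_add [DecidableEq n] {A : Matrix n n ℝ} (hA : A.det ≠ 0) :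
    Real.log A.det ≤
      Real.log (Fintype.card n).factorial + Fintype.card n * Real.log (∑ i, ∑ j, |A i j|) := by
  have h := det_le (abv := AbsoluteValue.abs) (abs_le_sum_sum_abs A)
  simp only [AbsoluteValue.abs_apply, nsmul_eq_mul] at h
  have hpos : 0 < ((Fintype.card n).factorial : ℝ) * (∑ i, ∑ j, |A i j|) ^ Fintype.card n :=
    (abs_pos.mpr hA).trans_le h
  rw [← Real.log_abs, ← Real.log_pow,
    ← Real.log_mul (by positivity) (right_ne_zero_of_mul hpos.ne')]
  exact Real.log_le_log (abs_pos.mpr hA) h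

end EntrywiseL1

end Matrix

section Glasso

variable {n : Type*} [Fintype n] [DecidableEq n]

noncomputable def glassoObjective (S : Matrix n n ℝ) (ρ : ℝ) (Θ : Matrix n n ℝ) : ℝ :=
  Real.log Θ.det - (S * Θ).trace - ρ * ∑ i, ∑ j, |Θ i j|

theorem continuousOn_glassoObjective (S : Matrix n n ℝ) (ρ : ℝ) :
    ContinuousOn (glassoObjective S ρ) {Θ | Θ.det ≠ 0} := by
  have hlogdet : ContinuousOn (fun Θ : Matrix n n ℝ => Real.log Θ.det) {Θ | Θ.det ≠ 0} :=
    continuous_id.matrix_det.continuousOn.log fun _ h => h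
  exact (hlogdet.sub (by fun_prop)).sub (by fun_prop)

theorem glassoObjective_le_log_det {S Θ : Matrix n n ℝ} (hS : S.PosSemidef)
    (hΘ : Θ.PosSemidef) (ρ : ℝ) :
    glassoObjective S ρ Θ ≤ Real.log Θ.det - ρ * ∑ i, ∑ j, |Θ i j| := by
  have := hS.trace_mul_nonneg_s7 hΘ
  unfold glassoObjective
  linarith

theorem exists_bound_of_le_glassoObjective {S : Matrix n n ℝ} (hS : S.PosSemidef) {ρ : ℝ}
    (hρ : 0 < ρ) (c : ℝ) : ∃ T, ∀ Θ : Matrix n n ℝ, Θ.PosDef → c ≤ glassoObjective S ρ Θ →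
      ∑ i, ∑ j, |Θ i j| ≤ T ∧ Real.exp c ≤ Θ.det := by
  obtain ⟨T, hT⟩ := eventually_atTop.mp <|
    (tendsto_add_mul_log_sub_mul_atBot (Real.log (Fintype.card n).factorial) (Fintype.card n) hρ)
      |>.eventually_lt_atBot c
  refine ⟨T, fun Θ hΘ hc => ⟨?_, ?_⟩⟩
  all_goals have hG := glassoObjective_le_log_det hS hΘ.posSemidef ρ
  · have hdet := log_det_le_log_factorial_add hΘ.det_pos.ne'
    by_contra! hlarge
    linarith [hT _ hlarge.le]
  · have hpenalty : 0 ≤ ρ * ∑ i, ∑ j, |Θ i j| := by positivity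
    rw [← Real.le_log_iff_exp_le hΘ.det_pos]
    linarith

end Glasso

theorem glasso_attains_max (p : ℕ) (S : Matrix (Fin p) (Fin p) ℝ)
    (hS : S.PosSemidef) (ρ : ℝ) (hρ : 0 < ρ) :
    ∃ Θ₀ : Matrix (Fin p) (Fin p) ℝ, Θ₀.PosDef ∧
      ∀ Θ : Matrix (Fin p) (Fin p) ℝ, Θ.PosDef →
        Real.log Θ.det - (S * Θ).trace - ρ * ∑ i, ∑ j, |Θ i j| ≤
        Real.log Θ₀.det - (S * Θ₀).trace - ρ * ∑ i, ∑ j, |Θ₀ i j| := by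
  set c := glassoObjective S ρ 1
  obtain ⟨T, hT⟩ := exists_bound_of_le_glassoObjective hS hρ c
  set K := {Θ : Matrix (Fin p) (Fin p) ℝ |
    Θ.PosSemidef ∧ ∑ i, ∑ j, |Θ i j| ≤ T ∧ Real.exp c ≤ Θ.det}
  have hKpd : K ⊆ {Θ | Θ.PosDef} := fun Θ hΘ =>
    hΘ.1.posDef_iff_det_ne_zero.mpr ((Real.exp_pos c).trans_le hΘ.2.2).ne'
  have hK : IsCompact K :=
    (isCompact_setOf_sum_sum_abs_le T).inter_right (isClosed_le continuous_const
      continuous_id.matrix_det) |>.inter_left isClosed_setOf_posSemidef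
  exact hK.exists_forall_le_of_superlevel_subset hKpd
    ((continuousOn_glassoObjective S ρ).mono fun Θ hΘ => (hKpd hΘ).det_pos.ne') PosDef.one
    fun Θ hΘ hc => ⟨PosDef.posSemidef hΘ, hT Θ hΘ hc⟩
end

section
/- If S is the 2×2 matrix with entries S₁₁=0, S₁₂=S₂₁=0, S₂₂=1, then for any ρ > 0 the off-diagonal graphical lasso objective G̃(Θ) = log det Θ − tr(SΘ) − 2ρ|Θ₁₂| is unbounded above over 2×2 positive definite matrices Θ. -/
/-!
Since `S₁₁ = 0`, the trace term does not see `Θ₁₁`. Along the diagonal matrices `Θ = diag(t, 1)` the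
penalty vanishes and the objective equals `log t - 1`, which tends to `+∞` with `t`.
-/

open Matrix

lemma posDef_diagonal_two {a b : ℝ} (ha : 0 < a) (hb : 0 < b) :
    (diagonal ![a, b]).PosDef :=
  posDef_diagonal_iff.mpr fun i => by fin_cases i <;> simpa

lemma odglasso_objective_diagonal (ρ t : ℝ) :
    Real.log (diagonal ![t, 1]).det -
        ((!![0, 0; 0, 1] : Matrix (Fin 2) (Fin 2) ℝ) * diagonal ![t, 1]).trace -
        2 * ρ * |diagonal ![t, 1] 0 1| = Real.log t - 1 := by
  simp [trace_fin_two, vecMul, dotProduct]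

theorem odglasso_unbounded_example_general (ρ : ℝ) :
    ∀ M : ℝ, ∃ Θ : Matrix (Fin 2) (Fin 2) ℝ, Θ.PosDef ∧
      M < Real.log Θ.det - ((!![0, 0; 0, 1] : Matrix (Fin 2) (Fin 2) ℝ) * Θ).trace -
        2 * ρ * |Θ 0 1| := by
  intro M
  refine ⟨diagonal ![Real.exp (M + 2), 1], posDef_diagonal_two (Real.exp_pos _) one_pos, ?_⟩
  rw [odglasso_objective_diagonal, Real.log_exp]
  linarith

theorem odglasso_unbounded_example (ρ : ℝ) (hρ : 0 < ρ) :
    ∀ M : ℝ, ∃ Θ : Matrix (Fin 2) (Fin 2) ℝ, Θ.PosDef ∧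
      M < Real.log Θ.det - ((!![0, 0; 0, 1] : Matrix (Fin 2) (Fin 2) ℝ) * Θ).trace -
        2 * ρ * |Θ 0 1| :=
  odglasso_unbounded_example_general ρ
end

section
/- If S is a real positive semidefinite p×p matrix with some diagonal entry equal to zero, then for every ρ > 0 the off-diagonal graphical lasso objective G̃(Θ) = log det Θ − tr(SΘ) − ρ Σ_{j≠k} |Θ_{jk}| is unbounded above over positive definite matrices Θ. -/
open Matrix

theorem odglasso_unbounded_of_zero_diag (p : ℕ) (S : Matrix (Fin p) (Fin p) ℝ)
    (hS : S.PosSemidef) (i : Fin p) (hi : S i i = 0) (ρ : ℝ) (hρ : 0 < ρ) :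
    ∀ M : ℝ, ∃ Θ : Matrix (Fin p) (Fin p) ℝ, Θ.PosDef ∧
      M < Real.log Θ.det - (S * Θ).trace -
        ρ * ∑ j, ∑ k, (if j = k then 0 else |Θ j k|) := by
  intro M
  set C : ℝ := ∑ j, (if j = i then 0 else S j j) with hC
  set t : ℝ := Real.exp (M + C + 1) with ht
  have ht0 : 0 < t := Real.exp_pos _
  set d : Fin p → ℝ := fun j => if j = i then t else 1 with hd
  refine ⟨Matrix.diagonal d, ?_, ?_⟩
  · apply Matrix.posDef_diagonal_iff.mpr
    intro j
    by_cases h : j = i <;> simp [hd, h, ht0]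
  · have hdet : (Matrix.diagonal d).det = t := by
      rw [Matrix.det_diagonal]
      rw [Finset.prod_eq_single i]
      · simp [hd]
      · intro b _ hb; simp [hd, hb]
      · simp
    have htr : (S * Matrix.diagonal d).trace = C := by
      rw [Matrix.trace]
      apply Finset.sum_congr rfl
      intro j _
      simp only [Matrix.diag_apply, Matrix.mul_diagonal]
      by_cases h : j = i <;> simp [hd, h, hi]
    have hsum : (∑ j, ∑ k, (if j = k then 0 else |Matrix.diagonal d j k|)) = 0 := by
      apply Finset.sum_eq_zero
      intro j _
      apply Finset.sum_eq_zero
      intro k _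
      by_cases h : j = k <;> simp [Matrix.diagonal, h]
    rw [hdet, htr, hsum, Real.log_exp]
    ring_nf
    linarith
end

section
/- Let w₁, w₂ be orthonormal vectors in ℝ^p, each with at least three non-zero entries in the same positions. If there exists a constant a such that w₁ⱼw₁ₖ = a·w₂ⱼw₂ₖ for all j ≠ k with these entries non-zero, then w₁ = ±w₂, contradicting orthogonality; hence no such constant a exists for orthogonal unit vectors sharing support. -/
open Matrix

theorem no_proportional_products (p : ℕ) (w₁ w₂ : Fin p → ℝ)
    (hw₁ : w₁ ⬝ᵥ w₁ = 1) (hw₂ : w₂ ⬝ᵥ w₂ = 1) (horth : w₁ ⬝ᵥ w₂ = 0)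
    (hsupp : {j | w₁ j ≠ 0} = {j | w₂ j ≠ 0})
    (hcard : 3 ≤ Set.ncard {j | w₁ j ≠ 0})
    (a : ℝ)
    (hprop : ∀ j k, j ≠ k → w₁ j ≠ 0 → w₁ k ≠ 0 →
      w₁ j * w₁ k = a * (w₂ j * w₂ k)) :
    False := by
  simp only [dotProduct] at hw₁ hw₂ horth
  have hsym : ∀ j, w₂ j ≠ 0 ↔ w₁ j ≠ 0 := by
    intro j
    constructor <;> intro h
    · have := (Set.ext_iff.mp hsupp j).mpr h; exact this
    · exact (Set.ext_iff.mp hsupp j).mp h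
  have hzero : ∀ j, w₁ j = 0 → w₂ j = 0 := by
    intro j hj
    by_contra h
    exact ((hsym j).mp h) hj
  -- step 1: squares proportional
  have hsq : ∀ j, w₁ j ^ 2 = a * w₂ j ^ 2 := by
    intro j
    by_cases hj : w₁ j = 0
    · rw [hj, hzero j hj]; ring
    · have hfin : ({i | w₁ i ≠ 0} \ {j}).Finite := Set.toFinite _
      have hmem : j ∈ {i | w₁ i ≠ 0} := hj
      have h1 : ({i | w₁ i ≠ 0} \ {j}).ncard + 1 = Set.ncard {i | w₁ i ≠ 0} :=
        Set.ncard_diff_singleton_add_one hmem (Set.toFinite _)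
      have h2 : 1 < ({i | w₁ i ≠ 0} \ {j}).ncard := by omega
      obtain ⟨k, l, hk, hl, hkl⟩ := (Set.one_lt_ncard_iff hfin).mp h2
      obtain ⟨hk1, hk2⟩ := hk
      obtain ⟨hl1, hl2⟩ := hl
      have hjk : j ≠ k := fun h => hk2 h.symm
      have hjl : j ≠ l := fun h => hl2 h.symm
      have e1 := hprop j k hjk hj hk1
      have e2 := hprop j l hjl hj hl1
      have e3 := hprop k l hkl hk1 hl1
      have hne : w₁ k * w₁ l ≠ 0 := mul_ne_zero hk1 hl1
      have key : w₁ j ^ 2 * (w₁ k * w₁ l) = (a * w₂ j ^ 2) * (w₁ k * w₁ l) := by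
        have : (w₁ j * w₁ k) * (w₁ j * w₁ l) = (a * (w₂ j * w₂ k)) * (a * (w₂ j * w₂ l)) := by
          rw [e1, e2]
        calc w₁ j ^ 2 * (w₁ k * w₁ l) = (w₁ j * w₁ k) * (w₁ j * w₁ l) := by ring
          _ = (a * (w₂ j * w₂ k)) * (a * (w₂ j * w₂ l)) := this
          _ = (a * w₂ j ^ 2) * (a * (w₂ k * w₂ l)) := by ring
          _ = (a * w₂ j ^ 2) * (w₁ k * w₁ l) := by rw [← e3]
      exact mul_right_cancel₀ hne key
  -- step 2: a = 1
  have ha : a = 1 := by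
    have : ∑ i, w₁ i * w₁ i = a * ∑ i, w₂ i * w₂ i := by
      rw [Finset.mul_sum]
      apply Finset.sum_congr rfl
      intro i _
      have := hsq i
      nlinarith [hsq i]
    rw [hw₁, hw₂] at this
    linarith
  subst ha
  -- step 3
  have hne : Set.ncard {j | w₁ j ≠ 0} ≠ 0 := by omega
  obtain ⟨j₀, hj₀⟩ := Set.nonempty_of_ncard_ne_zero hne
  have hj₀ : w₁ j₀ ≠ 0 := hj₀
  have hj₀' : w₂ j₀ ≠ 0 := (hsym j₀).mpr hj₀
  have key : ∀ k, w₁ j₀ ^ 2 * (w₁ k * w₂ k) = (w₁ j₀ * w₂ j₀) * w₁ k ^ 2 := by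
    intro k
    by_cases hk : w₁ k = 0
    · rw [hk, hzero k hk]; ring
    · by_cases hkj : k = j₀
      · subst hkj; ring
      · have h := hprop j₀ k (fun h => hkj h.symm) hj₀ hk
        have h2 : w₁ j₀ ^ 2 = w₂ j₀ ^ 2 := by have := hsq j₀; linarith
        simp only [one_mul] at h
        linear_combination (-(w₂ j₀ * w₁ k)) * h + (w₁ k * w₂ k) * h2
  have hsum : ∑ i, w₁ j₀ ^ 2 * (w₁ i * w₂ i) = ∑ i, (w₁ j₀ * w₂ j₀) * w₁ i ^ 2 :=
    Finset.sum_congr rfl (fun i _ => key i)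
  rw [← Finset.mul_sum, ← Finset.mul_sum, horth, mul_zero] at hsum
  have hsum2 : ∑ i, w₁ i ^ 2 = 1 := by
    rw [← hw₁]; apply Finset.sum_congr rfl; intro i _; ring
  rw [hsum2, mul_one] at hsum
  exact mul_ne_zero hj₀ hj₀' hsum.symm
end
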